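/- arXiv:0902.4130 — 4 statements merged into one kernel-verified Lean document; each statement's English description precedes it below -/
import Mathlib

section
/- Let 𝔛 be a Lie algebra over ℝ, let ∇ : 𝔛 × 𝔛 → 𝔛 be an ℝ-bilinear torsion-free connection (i.e. ∇_X Y − ∇_Y X = ⁅X,Y⁆ for all X,Y), and let J : 𝔛 → 𝔛 be an ℝ-linear map with J ∘ J = id. Define Q(X,Y) := (1/4)·[(∇_{JY}J)X + J((∇_Y J)X) + 2·J((∇_X J)Y)] and ∇̃_X Y := ∇_X Y + Q(X,Y). Then the modified connection ∇̃ is almost paracomplex, i.e. ∇̃_X (J Y) = J (∇̃_X Y) for all X, Y ∈ 𝔛 (equivalently, (∇̃_X J)Y = 0). -/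
/-!
Write `A(X,Y) = (∇_X J) Y`. Because `J² = id`, `A` anticommutes with `J` in its second slot,
`A(X, JY) = -J A(X,Y)`. Substituting this into the three terms of `Q`
gives `Q(X, JY) - J Q(X,Y) = -A(X,Y)`, which says precisely that `(∇̃_X J) Y = 0`.
-/

/-- The covariant derivative of `J` with respect to a connection `op`:
`(∇_X J) Y := ∇_X (J Y) − J (∇_X Y)`. -/
def covDerJ {𝔛 : Type*} [AddCommGroup 𝔛] [Module ℝ 𝔛] (J : 𝔛 →ₗ[ℝ] 𝔛)
    (op : 𝔛 → 𝔛 → 𝔛) : 𝔛 → 𝔛 → 𝔛 :=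
  fun X Y => op X (J Y) - J (op X Y)

/-- `Q(X,Y) := (1/4)·[(∇_{JY}J)X + J((∇_Y J)X) + 2·J((∇_X J)Y)]`. -/
noncomputable def Qmap {𝔛 : Type*} [AddCommGroup 𝔛] [Module ℝ 𝔛] (J : 𝔛 →ₗ[ℝ] 𝔛)
    (op : 𝔛 → 𝔛 → 𝔛) : 𝔛 → 𝔛 → 𝔛 :=
  fun X Y => (1 / 4 : ℝ) •
    (covDerJ J op (J Y) X + J (covDerJ J op Y X) + (2 : ℝ) • J (covDerJ J op X Y))

section Involutive

variable {𝔛 : Type*} [AddCommGroup 𝔛] [Module ℝ 𝔛] {J : 𝔛 →ₗ[ℝ] 𝔛}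

theorem covDerJ_apply_right_of_involutive (hJ : ∀ X, J (J X) = X) (op : 𝔛 → 𝔛 → 𝔛)
    (X Y : 𝔛) : covDerJ J op X (J Y) = -J (covDerJ J op X Y) := by
  simp only [covDerJ, hJ, map_sub, neg_sub]

theorem Qmap_apply_right_of_involutive (hJ : ∀ X, J (J X) = X) (op : 𝔛 → 𝔛 → 𝔛)
    (X Y : 𝔛) : Qmap J op X (J Y) = J (Qmap J op X Y) - covDerJ J op X Y := by
  simp only [Qmap, hJ, covDerJ_apply_right_of_involutive hJ, map_add, map_smul, map_neg]
  module

theorem covDerJ_add_Qmap_of_involutive (hJ : ∀ X, J (J X) = X) (op : 𝔛 → 𝔛 → 𝔛)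
    (X Y : 𝔛) : covDerJ J (fun A B => op A B + Qmap J op A B) X Y = 0 := by
  simp only [covDerJ, Qmap_apply_right_of_involutive hJ, map_add]
  abel

end Involutive

theorem modified_connection_is_paracomplex_general
    {𝔛 : Type*} [LieRing 𝔛] [LieAlgebra ℝ 𝔛]
    (D : 𝔛 →ₗ[ℝ] 𝔛 →ₗ[ℝ] 𝔛) (J : 𝔛 →ₗ[ℝ] 𝔛)
    (hJ : ∀ X : 𝔛, J (J X) = X) :
    ∀ X Y : 𝔛,
      D X (J Y) + Qmap J (fun A B => D A B) X (J Y)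
        = J (D X Y + Qmap J (fun A B => D A B) X Y) := fun X Y =>
  sub_eq_zero.mp (covDerJ_add_Qmap_of_involutive hJ (fun A B => D A B) X Y)

/-- If `∇` is a torsion-free bilinear connection on the Lie algebra `𝔛` and `J` is an
almost paracomplex structure (`J ∘ J = id`), then the modified connection
`∇̃_X Y := ∇_X Y + Q(X,Y)` is almost paracomplex: `∇̃_X (J Y) = J (∇̃_X Y)`. -/
theorem modified_connection_is_paracomplex
    {𝔛 : Type*} [LieRing 𝔛] [LieAlgebra ℝ 𝔛]
    (D : 𝔛 →ₗ[ℝ] 𝔛 →ₗ[ℝ] 𝔛) (J : 𝔛 →ₗ[ℝ] 𝔛)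
    (hJ : ∀ X : 𝔛, J (J X) = X)
    (hD : ∀ X Y : 𝔛, D X Y - D Y X = ⁅X, Y⁆) :
    ∀ X Y : 𝔛,
      D X (J Y) + Qmap J (fun A B => D A B) X (J Y)
        = J (D X Y + Qmap J (fun A B => D A B) X Y) :=
  modified_connection_is_paracomplex_general D J hJ
end

section
/- Let 𝔛 be a Lie algebra over ℝ, let ∇ : 𝔛 × 𝔛 → 𝔛 be an ℝ-bilinear torsion-free connection (∇_X Y − ∇_Y X = ⁅X,Y⁆), and let J : 𝔛 → 𝔛 be ℝ-linear with J ∘ J = id. Define Q(X,Y) := (1/4)·[(∇_{JY}J)X + J((∇_Y J)X) + 2·J((∇_X J)Y)] and ∇̃_X Y := ∇_X Y + Q(X,Y). Then the torsion T̃ of ∇̃ satisfies 4·T̃(X,Y) = −N_J(X,Y) for all X, Y ∈ 𝔛, where T̃(X,Y) = ∇̃_X Y − ∇̃_Y X − ⁅X,Y⁆ and N_J is the Nijenhuis tensor of J. -/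
/-- The Nijenhuis tensor of `J`:
`N_J(X,Y) := ⁅X,Y⁆ − J⁅JX,Y⁆ − J⁅X,JY⁆ + ⁅JX,JY⁆`. -/
def nijenhuis {𝔛 : Type*} [LieRing 𝔛] [LieAlgebra ℝ 𝔛] (J : 𝔛 →ₗ[ℝ] 𝔛) :
    𝔛 → 𝔛 → 𝔛 :=
  fun X Y => ⁅X, Y⁆ - J ⁅J X, Y⁆ - J ⁅X, J Y⁆ + ⁅J X, J Y⁆

/-! For a torsion-free connection the Nijenhuis tensor is the antisymmetrisation of
`(X, Y) ↦ (∇_{JX} J) Y − J ((∇_X J) Y)`, and the antisymmetric part of `4 Q` is exactly minus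
that expression. Since `∇` itself is torsion-free, the torsion of `∇ + Q` is the antisymmetric
part of `Q`, whence `4 T̃ = −N_J`. -/

theorem four_smul_Qmap_sub_Qmap {𝔛 : Type*} [AddCommGroup 𝔛] [Module ℝ 𝔛]
    (J : 𝔛 →ₗ[ℝ] 𝔛) (op : 𝔛 → 𝔛 → 𝔛) (X Y : 𝔛) :
    (4 : ℝ) • (Qmap J op X Y - Qmap J op Y X) =
      covDerJ J op (J Y) X - covDerJ J op (J X) Y
        + J (covDerJ J op X Y) - J (covDerJ J op Y X) := by
  simp only [Qmap]
  module

theorem nijenhuis_eq_of_torsion_free {𝔛 : Type*} [LieRing 𝔛] [LieAlgebra ℝ 𝔛]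
    {J : 𝔛 →ₗ[ℝ] 𝔛} (hJ : ∀ X, J (J X) = X)
    {op : 𝔛 → 𝔛 → 𝔛} (hop : ∀ X Y, op X Y - op Y X = ⁅X, Y⁆) (X Y : 𝔛) :
    nijenhuis J X Y =
      covDerJ J op (J X) Y - covDerJ J op (J Y) X
        - J (covDerJ J op X Y) + J (covDerJ J op Y X) := by
  simp only [nijenhuis, covDerJ, ← hop, map_sub, hJ]
  abel

/-- If `∇` is a torsion-free bilinear connection on the Lie algebra `𝔛` and `J` satisfies
`J ∘ J = id`, then the torsion `T̃` of the modified connection `∇̃_X Y := ∇_X Y + Q(X,Y)`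
satisfies `4·T̃(X,Y) = −N_J(X,Y)`. -/
theorem four_smul_torsion_eq_neg_nijenhuis
    {𝔛 : Type*} [LieRing 𝔛] [LieAlgebra ℝ 𝔛]
    (D : 𝔛 →ₗ[ℝ] 𝔛 →ₗ[ℝ] 𝔛) (J : 𝔛 →ₗ[ℝ] 𝔛)
    (hJ : ∀ X : 𝔛, J (J X) = X)
    (hD : ∀ X Y : 𝔛, D X Y - D Y X = ⁅X, Y⁆) :
    ∀ X Y : 𝔛,
      (4 : ℝ) • ((D X Y + Qmap J (fun A B => D A B) X Y)
          - (D Y X + Qmap J (fun A B => D A B) Y X) - ⁅X, Y⁆)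
        = -nijenhuis J X Y := by
  intro X Y
  have torsion_eq : (D X Y + Qmap J (fun A B => D A B) X Y)
      - (D Y X + Qmap J (fun A B => D A B) Y X) - ⁅X, Y⁆
        = Qmap J (fun A B => D A B) X Y - Qmap J (fun A B => D A B) Y X := by
    rw [← hD X Y]
    abel
  rw [torsion_eq, four_smul_Qmap_sub_Qmap, nijenhuis_eq_of_torsion_free hJ hD]
  abel
end

section
/- Let 𝔛 be a Lie algebra over ℝ admitting at least one ℝ-bilinear torsion-free connection ∇ (i.e. ∇_X Y − ∇_Y X = ⁅X,Y⁆), and let J : 𝔛 → 𝔛 be ℝ-linear with J ∘ J = id. Then there exists an ℝ-bilinear connection ∇̃ : 𝔛 × 𝔛 → 𝔛 which is almost paracomplex (∇̃_X (J Y) = J (∇̃_X Y) for all X,Y) and whose torsion T̃ satisfies N_J = −4·T̃, where N_J is the Nijenhuis tensor of J. -/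
/-!
Starting from the torsion-free `D`, put
`C(X,Y) = D_X Y + D_{JX} (JY) + ⁅X,Y⁆ - ⁅JX,JY⁆`.
Since `J ∘ J = id`, the average `C(X,Y) + J C(X,JY)` commutes with `J` in `Y`, and a quarter of
it is the required connection: torsion-freeness of `D` turns its torsion into `-¼ N_J`.
-/

section Average

variable {R M : Type*} [CommRing R] [AddCommGroup M] [Module R M]
  (J : M →ₗ[R] M) (B : M →ₗ[R] M →ₗ[R] M)

def paraAverage : M →ₗ[R] M →ₗ[R] M :=
  B + (B.compl₂ J).compr₂ J

theorem paraAverage_apply (X Y : M) : paraAverage J B X Y = B X Y + J (B X (J Y)) := rfl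

theorem paraAverage_apply_map {J} (hJ : ∀ X, J (J X) = X) (X Y : M) :
    paraAverage J B X (J Y) = J (paraAverage J B X Y) := by
  simp only [paraAverage_apply, hJ, map_add, add_comm]

theorem paraAverage_apply_sub_swap (X Y : M) :
    paraAverage J B X Y - paraAverage J B Y X =
      (B X Y - B Y X) + J (B X (J Y) - B Y (J X)) := by
  simp only [paraAverage_apply, map_sub]
  abel

end Average

section Lie

variable {R 𝔛 : Type*} [CommRing R] [LieRing 𝔛] [LieAlgebra R 𝔛]
  {D : 𝔛 →ₗ[R] 𝔛 →ₗ[R] 𝔛} {J : 𝔛 →ₗ[R] 𝔛}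

variable (D J) in
def paraPreconnection : 𝔛 →ₗ[R] 𝔛 →ₗ[R] 𝔛 :=
  D + D.compl₁₂ J J + LieModule.toEnd R 𝔛 𝔛 -
    (LieModule.toEnd R 𝔛 𝔛 : 𝔛 →ₗ[R] 𝔛 →ₗ[R] 𝔛).compl₁₂ J J

theorem paraPreconnection_apply (X Y : 𝔛) :
    paraPreconnection D J X Y = D X Y + D (J X) (J Y) + ⁅X, Y⁆ - ⁅J X, J Y⁆ := by
  simp [paraPreconnection]

theorem paraPreconnection_sub_swap (hD : ∀ X Y : 𝔛, D X Y - D Y X = ⁅X, Y⁆) (X Y : 𝔛) :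
    paraPreconnection D J X Y - paraPreconnection D J Y X =
      (3 : R) • ⁅X, Y⁆ - ⁅J X, J Y⁆ := by
  simp only [paraPreconnection_apply]
  linear_combination (norm := module)
    hD X Y + hD (J X) (J Y) + lie_skew X Y - lie_skew (J X) (J Y)


theorem paraPreconnection_apply_map_sub_swap (hD : ∀ X Y : 𝔛, D X Y - D Y X = ⁅X, Y⁆)
    (hJ : ∀ X, J (J X) = X) (X Y : 𝔛) :
    paraPreconnection D J X (J Y) - paraPreconnection D J Y (J X) =
      ⁅X, J Y⁆ + ⁅J X, Y⁆ := by
  simp only [paraPreconnection_apply, hJ]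
  linear_combination (norm := module)
    hD X (J Y) + hD (J X) Y - lie_skew X (J Y) + lie_skew (J X) Y

end Lie

theorem paraAverage_paraPreconnection_sub_swap {𝔛 : Type*} [LieRing 𝔛] [LieAlgebra ℝ 𝔛]
    {D : 𝔛 →ₗ[ℝ] 𝔛 →ₗ[ℝ] 𝔛} {J : 𝔛 →ₗ[ℝ] 𝔛}
    (hD : ∀ X Y : 𝔛, D X Y - D Y X = ⁅X, Y⁆) (hJ : ∀ X, J (J X) = X) (X Y : 𝔛) :
    paraAverage J (paraPreconnection D J) X Y - paraAverage J (paraPreconnection D J) Y X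
      - (4 : ℝ) • ⁅X, Y⁆ = -nijenhuis J X Y := by
  rw [paraAverage_apply_sub_swap, paraPreconnection_sub_swap hD,
    paraPreconnection_apply_map_sub_swap hD hJ, nijenhuis]
  simp only [map_add]
  module

/-- If the Lie algebra `𝔛` admits a torsion-free bilinear connection and `J` satisfies
`J ∘ J = id`, then there is a bilinear connection `∇̃` which is almost paracomplex
(`∇̃_X (J Y) = J (∇̃_X Y)`) and whose torsion `T̃` satisfies `N_J = −4·T̃`. -/
theorem exists_paracomplex_connection_with_torsion
    {𝔛 : Type*} [LieRing 𝔛] [LieAlgebra ℝ 𝔛]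
    (D : 𝔛 →ₗ[ℝ] 𝔛 →ₗ[ℝ] 𝔛)
    (hD : ∀ X Y : 𝔛, D X Y - D Y X = ⁅X, Y⁆)
    (J : 𝔛 →ₗ[ℝ] 𝔛) (hJ : ∀ X : 𝔛, J (J X) = X) :
    ∃ D' : 𝔛 →ₗ[ℝ] 𝔛 →ₗ[ℝ] 𝔛,
      (∀ X Y : 𝔛, D' X (J Y) = J (D' X Y)) ∧
      (∀ X Y : 𝔛, nijenhuis J X Y = (-4 : ℝ) • (D' X Y - D' Y X - ⁅X, Y⁆)) := by
  refine ⟨(4⁻¹ : ℝ) • paraAverage J (paraPreconnection D J),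
    fun X Y => ?_, fun X Y => ?_⟩
  · simp only [LinearMap.smul_apply, paraAverage_apply_map _ hJ, map_smul]
  · have key := paraAverage_paraPreconnection_sub_swap hD hJ X Y
    simp only [LinearMap.smul_apply]
    linear_combination (norm := module) key
end

section
/- Let 𝔛 be a Lie algebra over ℝ admitting at least one ℝ-bilinear torsion-free connection ∇ (∇_X Y − ∇_Y X = ⁅X,Y⁆), and let J : 𝔛 → 𝔛 be ℝ-linear with J ∘ J = id whose Nijenhuis tensor vanishes identically (N_J(X,Y) = 0 for all X,Y). Then there exists an ℝ-bilinear connection ∇̃ : 𝔛 × 𝔛 → 𝔛 which is both torsion-free (∇̃_X Y − ∇̃_Y X = ⁅X,Y⁆) and paracomplex, i.e. ∇̃_X (J Y) = J (∇̃_X Y) for all X, Y ∈ 𝔛. -/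
namespace AbstractConnection

section LinearAlgebra

variable {K M : Type*} [Field K] [AddCommGroup M] [Module K M]

def IsParacomplex (J : M →ₗ[K] M) (D : M →ₗ[K] M →ₗ[K] M) : Prop :=
  ∀ X Y, D X (J Y) = J (D X Y)

theorem IsParacomplex.zero (J : M →ₗ[K] M) : IsParacomplex J 0 := fun _ _ => by simp

theorem IsParacomplex.add {J : M →ₗ[K] M} {D S : M →ₗ[K] M →ₗ[K] M}
    (hD : IsParacomplex J D) (hS : IsParacomplex J S) : IsParacomplex J (D + S) :=
  fun X Y => by simp only [LinearMap.add_apply, hD X Y, hS X Y, map_add]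

def paracomplexCorrection (J : M →ₗ[K] M) (T : M →ₗ[K] M →ₗ[K] M) : M →ₗ[K] M →ₗ[K] M :=
  (1 / 8 : K) • (T.compl₁₂ J J + (T.comp J).compr₂ J) - (3 / 8 : K) • (T + (T.compl₂ J).compr₂ J)

@[simp]
theorem paracomplexCorrection_apply (J : M →ₗ[K] M) (T : M →ₗ[K] M →ₗ[K] M) (X Y : M) :
    paracomplexCorrection J T X Y =
      (1 / 8 : K) • (T (J X) (J Y) + J (T (J X) Y)) - (3 / 8 : K) • (T X Y + J (T X (J Y))) :=
  rfl

variable {J : M →ₗ[K] M} {T : M →ₗ[K] M →ₗ[K] M}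

theorem isParacomplex_paracomplexCorrection (hJ : ∀ X, J (J X) = X) :
    IsParacomplex J (paracomplexCorrection J T) := fun X Y => by
  simp only [paracomplexCorrection_apply, hJ, map_sub, map_add, map_smul]
  module

theorem paracomplexCorrection_sub_swap [CharZero K] (hT : ∀ X Y, T Y X = -T X Y)
    (hJT : ∀ X Y, T X Y + T (J X) (J Y) = J (T (J X) Y + T X (J Y))) (X Y : M) :
    paracomplexCorrection J T X Y - paracomplexCorrection J T Y X = -T X Y := by
  have h := hJT X Y
  rw [map_add] at h
  simp only [paracomplexCorrection_apply, hT X Y, hT (J X) Y, hT X (J Y), hT (J X) (J Y),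
    map_neg]
  linear_combination (norm := module) (1 / 4 : K) • h

end LinearAlgebra

variable {𝔛 : Type*} [LieRing 𝔛] [LieAlgebra ℝ 𝔛]

def torsion (D : 𝔛 →ₗ[ℝ] 𝔛 →ₗ[ℝ] 𝔛) : 𝔛 →ₗ[ℝ] 𝔛 →ₗ[ℝ] 𝔛 :=
  D - D.flip - (LieModule.toEnd ℝ 𝔛 𝔛 : 𝔛 →ₗ[ℝ] Module.End ℝ 𝔛)

@[simp]
theorem torsion_apply (D : 𝔛 →ₗ[ℝ] 𝔛 →ₗ[ℝ] 𝔛) (X Y : 𝔛) :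
    torsion D X Y = D X Y - D Y X - ⁅X, Y⁆ :=
  rfl

theorem torsion_swap (D : 𝔛 →ₗ[ℝ] 𝔛 →ₗ[ℝ] 𝔛) (X Y : 𝔛) : torsion D Y X = -torsion D X Y := by
  rw [torsion_apply, torsion_apply, ← lie_skew]
  abel

theorem IsParacomplex.nijenhuis_eq {J : 𝔛 →ₗ[ℝ] 𝔛} {D : 𝔛 →ₗ[ℝ] 𝔛 →ₗ[ℝ] 𝔛}
    (hD : IsParacomplex J D) (hJ : ∀ X, J (J X) = X) (X Y : 𝔛) :
    nijenhuis J X Y = J (torsion D (J X) Y + torsion D X (J Y))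
      - (torsion D X Y + torsion D (J X) (J Y)) := by
  have hDJ : ∀ X Y, J (D X Y) = D X (J Y) := fun X Y => (hD X Y).symm
  simp only [nijenhuis, torsion_apply, map_add, map_sub, hDJ, hJ]
  abel

theorem exists_torsion_eq_zero_of_nijenhuis_eq_zero {J : 𝔛 →ₗ[ℝ] 𝔛}
    {D : 𝔛 →ₗ[ℝ] 𝔛 →ₗ[ℝ] 𝔛} (hD : IsParacomplex J D) (hJ : ∀ X, J (J X) = X)
    (hN : ∀ X Y, nijenhuis J X Y = 0) :
    ∃ D' : 𝔛 →ₗ[ℝ] 𝔛 →ₗ[ℝ] 𝔛, torsion D' = 0 ∧ IsParacomplex J D' := by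
  refine ⟨D + paracomplexCorrection J (torsion D), ?_,
    hD.add (isParacomplex_paracomplexCorrection hJ)⟩
  have hJT : ∀ X Y, torsion D X Y + torsion D (J X) (J Y) =
      J (torsion D (J X) Y + torsion D X (J Y)) := fun X Y => by
    rw [← sub_eq_zero, ← neg_sub, ← hD.nijenhuis_eq hJ, hN, neg_zero]
  ext X Y
  have hS := paracomplexCorrection_sub_swap (torsion_swap D) hJT X Y
  simp only [torsion_apply, LinearMap.add_apply, LinearMap.zero_apply] at hS ⊢
  linear_combination (norm := module) hS

end AbstractConnection

open AbstractConnection in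
theorem exists_torsionFree_paracomplex_connection_general
    {𝔛 : Type*} [LieRing 𝔛] [LieAlgebra ℝ 𝔛]
    (J : 𝔛 →ₗ[ℝ] 𝔛) (hJ : ∀ X : 𝔛, J (J X) = X)
    (hN : ∀ X Y : 𝔛, nijenhuis J X Y = 0) :
    ∃ D' : 𝔛 →ₗ[ℝ] 𝔛 →ₗ[ℝ] 𝔛,
      (∀ X Y : 𝔛, D' X Y - D' Y X = ⁅X, Y⁆) ∧
      (∀ X Y : 𝔛, D' X (J Y) = J (D' X Y)) := by
  obtain ⟨D', hT, hJD'⟩ :=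
    exists_torsion_eq_zero_of_nijenhuis_eq_zero (IsParacomplex.zero J) hJ hN
  exact ⟨D', fun X Y => sub_eq_zero.mp (by simpa using LinearMap.congr_fun₂ hT X Y), hJD'⟩

/-- If the Lie algebra `𝔛` admits a torsion-free bilinear connection and `J` is an
almost paracomplex structure (`J ∘ J = id`) whose Nijenhuis tensor vanishes identically,
then there exists a bilinear connection `∇̃` which is torsion-free and paracomplex,
i.e. `∇̃_X (J Y) = J (∇̃_X Y)` for all `X, Y`. -/
theorem exists_torsionFree_paracomplex_connection
    {𝔛 : Type*} [LieRing 𝔛] [LieAlgebra ℝ 𝔛]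
    (D : 𝔛 →ₗ[ℝ] 𝔛 →ₗ[ℝ] 𝔛)
    (hD : ∀ X Y : 𝔛, D X Y - D Y X = ⁅X, Y⁆)
    (J : 𝔛 →ₗ[ℝ] 𝔛) (hJ : ∀ X : 𝔛, J (J X) = X)
    (hN : ∀ X Y : 𝔛, nijenhuis J X Y = 0) :
    ∃ D' : 𝔛 →ₗ[ℝ] 𝔛 →ₗ[ℝ] 𝔛,
      (∀ X Y : 𝔛, D' X Y - D' Y X = ⁅X, Y⁆) ∧
      (∀ X Y : 𝔛, D' X (J Y) = J (D' X Y)) :=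
  exists_torsionFree_paracomplex_connection_general J hJ hN
end
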